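/- Let (E, w) be a finite weighted graph and S the set of vertices not connecting to any cycle. Then M(E,w) is conical if and only if every non-sink vertex in S has weight one. -/

import Mathlib

/-- The out-neighbourhood sum `Σ_{e ∈ s⁻¹(v)} r(e)` in the free commutative
monoid `V →₀ ℕ`, for a graph with finitely many edges. -/
noncomputable def frTrans {V E : Type} [Fintype E] [DecidableEq V] (s r : E → V) (v : V) : V →₀ ℕ :=
  ∑ e ∈ Finset.univ.filter (fun e => s e = v), Finsupp.single (r e) 1

/-- The vertex weight: `w(v) = max{w(e) : e ∈ s⁻¹(v)}` for non-sinks and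
`w(v) = 1` for sinks. -/
def fwVert {V E : Type} [Fintype E] [DecidableEq V] (s : E → V) (w : E → ℕ) (v : V) : ℕ :=
  max 1 ((Finset.univ.filter (fun e => s e = v)).sup w)

/-- The defining relations of the graph monoid `M(E,w)`:
`w(v)·v = Σ_{e ∈ s⁻¹(v)} r(e)` for every vertex `v` (so sinks become `0`). -/
def gRel {V E : Type} [Fintype E] [DecidableEq V] (s r : E → V) (w : E → ℕ)
    (a b : V →₀ ℕ) : Prop :=
  ∃ v : V, a = Finsupp.single v (fwVert s w v) ∧ b = frTrans s r v

/-- The graph monoid `M(E,w)` of a finite weighted graph: the free commutative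
monoid on the vertices modulo the congruence generated by the relations. -/
abbrev graphMonoid {V E : Type} [Fintype E] [DecidableEq V] (s r : E → V) (w : E → ℕ) :=
  (addConGen (gRel s r w)).Quotient

/-- The class of `a : V →₀ ℕ` in the graph monoid `M(E,w)`. -/
noncomputable def gMk {V E : Type} [Fintype E] [DecidableEq V] (s r : E → V) (w : E → ℕ)
    (a : V →₀ ℕ) : graphMonoid s r w :=
  (addConGen (gRel s r w)).mk' a

/-- One vertex steps to another if there is an edge from the first to the second. -/
def eRel {V E : Type} (s r : E → V) (x y : V) : Prop := ∃ e : E, s e = x ∧ r e = y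

/-- The set `S` of vertices which do not connect to any cycle. -/
def noCycleSet {V E : Type} (s r : E → V) : Set V :=
  {v : V | ¬ ∃ u : V, Relation.ReflTransGen (eRel s r) v u ∧ Relation.TransGen (eRel s r) u u}

/-!
Write `[v]` for the class of a vertex and `S` for the vertices connecting to no cycle. `S` is
closed under edges and the edge relation on `S` is well founded, so one can induct along it using
`w(v)·[v] = Σ_{s(e) = v} [r(e)]`: if `M(E,w)` is conical, or if all weights on `S` are one,
then `[v] = 0` for every `v ∈ S`.

To go back, map `M(E,w)` to `WithTop G`, where `G` is the free abelian group on `V` modulo the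
relations at the vertices of `S`, sending `v ∈ S` to its class and `v ∉ S` to `⊤`; this respects
the relations because every vertex outside `S` has an edge to a vertex outside `S`. If `[v] = 0`
for some `v ∈ S`, then `v` is an integer combination of the relations at vertices of `S`; at a
source of the support of that combination only the term `w(u)·u` survives, forcing `w(v) = 1`.
If `[a] + [b] = 0`, the image of `a` is not `⊤`, so `a` is supported in `S` and `[a] = 0` once
all weights on `S` are one.
-/

open Finsupp Relation

theorem nsmul_eq_zero_of_conical {M : Type*} [AddMonoid M]
    (hM : ∀ x y : M, x + y = 0 → x = 0 ∧ y = 0) {n : ℕ} (hn : n ≠ 0) {x : M} (h : n • x = 0) :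
    x = 0 := by
  obtain ⟨k, rfl⟩ := Nat.exists_eq_succ_of_ne_zero hn
  exact (hM _ _ ((succ_nsmul' x k).symm.trans h)).1

theorem WithTop.nsmul_top {α : Type*} [AddMonoid α] {n : ℕ} (hn : n ≠ 0) :
    n • (⊤ : WithTop α) = ⊤ := by
  obtain ⟨k, rfl⟩ := Nat.exists_eq_succ_of_ne_zero hn
  rfl

theorem wellFounded_of_not_transGen_self {α : Type*} [Finite α] {R : α → α → Prop}
    (h : ∀ a, ¬TransGen R a a) : WellFounded R :=
  have : Std.Irrefl (TransGen R) := ⟨h⟩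
  Subrelation.wf TransGen.single (Finite.wellFounded_of_trans_of_irrefl (TransGen R))

section Graph

variable {V E : Type} (s r : E → V)

theorem mem_noCycleSet_of_eRel {u v : V} (hu : u ∈ noCycleSet s r) (h : eRel s r u v) :
    v ∈ noCycleSet s r :=
  fun ⟨x, hvx, hxx⟩ => hu ⟨x, ReflTransGen.head h hvx, hxx⟩

theorem exists_eRel_notMem_noCycleSet {u : V} (hu : u ∉ noCycleSet s r) :
    ∃ e : E, s e = u ∧ r e ∉ noCycleSet s r := by
  simp only [noCycleSet, Set.mem_ofPred_eq, not_not] at hu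
  obtain ⟨x, hux, hxx⟩ := hu
  rcases hux.cases_head with rfl | ⟨y, ⟨e, he, rfl⟩, hyx⟩
  · obtain ⟨y, ⟨e, he, rfl⟩, hyu⟩ := TransGen.head'_iff.1 hxx
    exact ⟨e, he, fun hy => hy ⟨u, hyu, hxx⟩⟩
  · exact ⟨e, he, fun hy => hy ⟨x, hyx, hxx⟩⟩

def noCycleEdge (u v : V) : Prop := u ∈ noCycleSet s r ∧ eRel s r u v

theorem not_transGen_noCycleEdge_self (u : V) : ¬TransGen (noCycleEdge s r) u u := fun h =>
  (TransGen.head'_iff.1 h).choose_spec.1.1 ⟨u, .refl, TransGen.mono (fun _ _ h => h.2) _ _ h⟩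

variable [Finite V]

theorem noCycleSet_induction {P : V → Prop}
    (step : ∀ v ∈ noCycleSet s r, (∀ e, s e = v → P (r e)) → P v) :
    ∀ v ∈ noCycleSet s r, P v := by
  have hwf : WellFounded (flip (noCycleEdge s r)) :=
    wellFounded_of_not_transGen_self fun u h => not_transGen_noCycleEdge_self s r u h.swap
  intro v
  induction v using hwf.induction with
  | _ v ih =>
    exact fun hv => step v hv fun e he =>
      ih (r e) ⟨hv, e, he, rfl⟩ (mem_noCycleSet_of_eRel s r hv ⟨e, he, rfl⟩)

theorem exists_source_of_subset_noCycleSet {D : Set V} (hD : D ⊆ noCycleSet s r)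
    (hne : D.Nonempty) : ∃ u ∈ D, ∀ e, s e ∈ D → r e ≠ u := by
  obtain ⟨u, hu, hmin⟩ :=
    (wellFounded_of_not_transGen_self (not_transGen_noCycleEdge_self s r)).has_min D hne
  exact ⟨u, hu, fun e he hre => hmin (s e) he ⟨hD he, e, rfl, hre⟩⟩

end Graph

section GraphMonoid

variable {V E : Type} [Fintype E] [DecidableEq V] (s r : E → V) (w : E → ℕ)

theorem fwVert_pos (v : V) : 0 < fwVert s w v := lt_max_of_lt_left one_pos

theorem fwVert_eq_one_of_forall_ne {v : V} (h : ∀ e, s e ≠ v) : fwVert s w v = 1 := by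
  simp [fwVert, Finset.filter_false_of_mem fun e _ => h e]

theorem gMk_surjective : Function.Surjective (gMk s r w) := AddCon.mk'_surjective

theorem gMk_nsmul (n : ℕ) (a : V →₀ ℕ) : gMk s r w (n • a) = n • gMk s r w a :=
  map_nsmul (addConGen (gRel s r w)).mk' n a

theorem gMk_sum {ι : Type} (t : Finset ι) (f : ι → V →₀ ℕ) :
    gMk s r w (∑ i ∈ t, f i) = ∑ i ∈ t, gMk s r w (f i) :=
  map_sum (addConGen (gRel s r w)).mk' f t

theorem fwVert_nsmul_gMk_single (v : V) :
    fwVert s w v • gMk s r w (single v 1) =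
      ∑ e ∈ Finset.univ.filter (fun e => s e = v), gMk s r w (single (r e) 1) := by
  rw [← gMk_nsmul, smul_single_one, ← gMk_sum, ← frTrans]
  exact (addConGen (gRel s r w)).eq.2 (AddConGen.Rel.of _ _ ⟨v, rfl, rfl⟩)

theorem gMk_eq_zero_of_support_subset
    (h0 : ∀ v ∈ noCycleSet s r, gMk s r w (single v 1) = 0) {a : V →₀ ℕ}
    (ha : ↑a.support ⊆ noCycleSet s r) : gMk s r w a = 0 := by
  rw [← a.sum_single, Finsupp.sum, gMk_sum]
  refine Finset.sum_eq_zero fun v hv => ?_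
  rw [← smul_single_one, gMk_nsmul, h0 v (ha hv), nsmul_zero]

noncomputable def relRow (v : V) : V →₀ ℤ :=
  single v (fwVert s w v : ℤ) - ∑ e ∈ Finset.univ.filter (fun e => s e = v), single (r e) 1

theorem relRow_apply_of_forall_ne {v x : V} (h : ∀ e, s e = v → r e ≠ x) :
    relRow s r w v x = if v = x then (fwVert s w v : ℤ) else 0 := by
  rw [relRow, Finsupp.sub_apply, finsetSum_apply, Finset.sum_eq_zero, sub_zero, single_apply]
  exact fun e he => single_eq_of_ne' (h e (Finset.mem_filter.1 he).2)

abbrev NoCycleGroup := (V →₀ ℤ) ⧸ Submodule.span ℤ (relRow s r w '' noCycleSet s r)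

open Classical in
noncomputable def vertexClass (v : V) : WithTop (NoCycleGroup s r w) :=
  if v ∈ noCycleSet s r then ↑((Submodule.span ℤ _).mkQ (single v 1) : NoCycleGroup s r w) else ⊤

noncomputable def toNoCycleGroup : (V →₀ ℕ) →+ WithTop (NoCycleGroup s r w) :=
  liftAddHom fun v => multiplesHom _ (vertexClass s r w v)

theorem toNoCycleGroup_single (v : V) (n : ℕ) :
    toNoCycleGroup s r w (single v n) = n • vertexClass s r w v := by
  rw [toNoCycleGroup, liftAddHom_apply_single, multiplesHom_apply]

theorem toNoCycleGroup_frTrans (v : V) :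
    toNoCycleGroup s r w (frTrans s r v) =
      ∑ e ∈ Finset.univ.filter (fun e => s e = v), vertexClass s r w (r e) := by
  simp only [frTrans, map_sum, toNoCycleGroup_single, one_nsmul]

theorem toNoCycleGroup_eq_of_gRel {a b : V →₀ ℕ} (h : gRel s r w a b) :
    toNoCycleGroup s r w a = toNoCycleGroup s r w b := by
  obtain ⟨v, rfl, rfl⟩ := h
  rw [toNoCycleGroup_single, toNoCycleGroup_frTrans]
  by_cases hv : v ∈ noCycleSet s r
  · have hclass : ∀ e ∈ Finset.univ.filter (fun e => s e = v), vertexClass s r w (r e) =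
        ↑((Submodule.span ℤ _).mkQ (single (r e) 1) : NoCycleGroup s r w) := fun e he =>
      if_pos (mem_noCycleSet_of_eRel s r hv ⟨e, (Finset.mem_filter.1 he).2, rfl⟩)
    rw [vertexClass, if_pos hv, Finset.sum_congr rfl hclass, ← WithTop.coe_nsmul,
      ← WithTop.coe_sum, WithTop.coe_inj, ← map_nsmul, ← map_sum,
      Submodule.mkQ_apply, Submodule.mkQ_apply, Submodule.Quotient.eq]
    exact Submodule.subset_span ⟨v, hv, by simp [relRow]⟩
  · obtain ⟨e, he, hre⟩ := exists_eRel_notMem_noCycleSet s r hv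
    rw [vertexClass, if_neg hv, WithTop.nsmul_top (fwVert_pos s w v).ne', eq_comm,
      WithTop.sum_eq_top]
    exact ⟨e, Finset.mem_filter.2 ⟨Finset.mem_univ e, he⟩, if_neg hre⟩

noncomputable def graphMonoidToNoCycleGroup : graphMonoid s r w →+ WithTop (NoCycleGroup s r w) :=
  AddCon.lift _ (toNoCycleGroup s r w) <| AddCon.addConGen_le.2 fun _ _ h =>
    (AddCon.ker_rel _).2 (toNoCycleGroup_eq_of_gRel s r w h)

theorem graphMonoidToNoCycleGroup_gMk (a : V →₀ ℕ) :
    graphMonoidToNoCycleGroup s r w (gMk s r w a) = toNoCycleGroup s r w a :=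
  AddCon.lift_mk' _ a

theorem support_subset_noCycleSet_of_ne_top {a : V →₀ ℕ} (h : toNoCycleGroup s r w a ≠ ⊤) :
    ↑a.support ⊆ noCycleSet s r := by
  intro v hv
  by_contra hvS
  refine h ?_
  rw [← a.sum_single, Finsupp.sum, map_sum, WithTop.sum_eq_top]
  refine ⟨v, hv, ?_⟩
  rw [toNoCycleGroup_single, vertexClass, if_neg hvS, WithTop.nsmul_top (mem_support_iff.1 hv)]

theorem gMk_eq_zero_of_add_eq_zero (h0 : ∀ v ∈ noCycleSet s r, gMk s r w (single v 1) = 0)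
    {a b : V →₀ ℕ} (h : gMk s r w a + gMk s r w b = 0) : gMk s r w a = 0 := by
  refine gMk_eq_zero_of_support_subset s r w h0 (support_subset_noCycleSet_of_ne_top s r w ?_)
  have himage := congrArg (graphMonoidToNoCycleGroup s r w) h
  rw [map_add, map_zero, graphMonoidToNoCycleGroup_gMk, graphMonoidToNoCycleGroup_gMk] at himage
  exact (WithTop.add_ne_top.1 (himage ▸ WithTop.zero_ne_top)).1

variable [Finite V]

theorem gMk_single_eq_zero_of_mem_noCycleSet
    (hcancel : ∀ v ∈ noCycleSet s r,
      fwVert s w v • gMk s r w (single v 1) = 0 → gMk s r w (single v 1) = 0)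
    {v : V} (hv : v ∈ noCycleSet s r) : gMk s r w (single v 1) = 0 := by
  refine noCycleSet_induction s r (fun v hv ih => hcancel v hv ?_) v hv
  rw [fwVert_nsmul_gMk_single]
  exact Finset.sum_eq_zero fun e he => ih e (Finset.mem_filter.1 he).2

theorem fwVert_eq_one_of_single_mem_span {v : V}
    (h : single v 1 ∈ Submodule.span ℤ (relRow s r w '' noCycleSet s r)) : fwVert s w v = 1 := by
  obtain ⟨l, hl, hlv⟩ := (mem_span_image_iff_linearCombination ℤ).1 h
  have hl0 : l ≠ 0 := by
    rintro rfl
    exact single_ne_zero.2 one_ne_zero (hlv.symm.trans (map_zero _))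
  obtain ⟨u, hu, hsource⟩ := exists_source_of_subset_noCycleSet s r ((mem_supported ℤ l).1 hl)
    (Finset.coe_nonempty.2 (support_nonempty_iff.2 hl0))
  have hrow : ∀ x ∈ l.support, relRow s r w x u = if x = u then (fwVert s w x : ℤ) else 0 :=
    fun x hx => relRow_apply_of_forall_ne s r w fun e he => hsource e (he ▸ hx)
  have hcoord : linearCombination ℤ (relRow s r w) l u = l u * fwVert s w u := by
    rw [linearCombination_apply, Finsupp.sum_apply, Finsupp.sum, Finset.sum_eq_single u]
    · rw [Finsupp.smul_apply, hrow u hu, if_pos rfl, smul_eq_mul]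
    · exact fun x hx hxu => by rw [Finsupp.smul_apply, hrow x hx, if_neg hxu, smul_zero]
    · exact fun hu' => absurd hu hu'
  rw [hlv, single_apply] at hcoord
  obtain rfl : v = u := by
    by_contra hvu
    rw [if_neg hvu] at hcoord
    exact mul_ne_zero (mem_support_iff.1 hu) (by exact_mod_cast (fwVert_pos s w u).ne') hcoord.symm
  rw [if_pos rfl] at hcoord
  exact_mod_cast Int.eq_one_of_mul_eq_one_left (Int.natCast_nonneg _) hcoord.symm

theorem fwVert_eq_one_of_gMk_single_eq_zero {v : V} (hv : v ∈ noCycleSet s r)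
    (h : gMk s r w (single v 1) = 0) : fwVert s w v = 1 := by
  apply fwVert_eq_one_of_single_mem_span s r w
  have himage := congrArg (graphMonoidToNoCycleGroup s r w) h
  rwa [graphMonoidToNoCycleGroup_gMk, toNoCycleGroup_single, one_nsmul, vertexClass, if_pos hv,
    map_zero, WithTop.coe_eq_zero, Submodule.mkQ_apply, Submodule.Quotient.mk_eq_zero] at himage

end GraphMonoid

theorem graphMonoid_conical_iff_general {V E : Type} [Fintype V] [Fintype E] [DecidableEq V]
    (s r : E → V) (w : E → ℕ) :
    (∀ x y : graphMonoid s r w, x + y = 0 → x = 0 ∧ y = 0) ↔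
      ∀ v ∈ noCycleSet s r, (∃ e : E, s e = v) → fwVert s w v = 1 := by
  constructor
  · intro hconical v hv _
    refine fwVert_eq_one_of_gMk_single_eq_zero s r w hv ?_
    exact gMk_single_eq_zero_of_mem_noCycleSet s r w
      (fun u _ => nsmul_eq_zero_of_conical hconical (fwVert_pos s w u).ne') hv
  · intro hweight
    have hweight_one : ∀ v ∈ noCycleSet s r, fwVert s w v = 1 := fun v hv => by
      by_cases hsink : ∃ e, s e = v
      · exact hweight v hv hsink
      · exact fwVert_eq_one_of_forall_ne s w fun e he => hsink ⟨e, he⟩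
    have h0 : ∀ v ∈ noCycleSet s r, gMk s r w (single v 1) = 0 :=
      fun v => gMk_single_eq_zero_of_mem_noCycleSet s r w fun u hu h => by
        rwa [hweight_one u hu, one_nsmul] at h
    intro x y hxy
    obtain ⟨a, rfl⟩ := gMk_surjective s r w x
    obtain ⟨b, rfl⟩ := gMk_surjective s r w y
    exact ⟨gMk_eq_zero_of_add_eq_zero s r w h0 hxy,
      gMk_eq_zero_of_add_eq_zero s r w h0 ((add_comm _ _).trans hxy)⟩

/-- For a finite weighted graph `(E,w)` with `S` the set of vertices not
connecting to any cycle, `M(E,w)` is conical if and only if every non-sink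
vertex in `S` has weight one. -/
theorem graphMonoid_conical_iff {V E : Type} [Fintype V] [Fintype E] [DecidableEq V]
    (s r : E → V) (w : E → ℕ) (hw : ∀ e : E, 0 < w e) :
    (∀ x y : graphMonoid s r w, x + y = 0 → x = 0 ∧ y = 0) ↔
      ∀ v ∈ noCycleSet s r, (∃ e : E, s e = v) → fwVert s w v = 1 :=
  graphMonoid_conical_iff_general s r w
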